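/- Let (ℙ,≤) be a partial order with the hereditary-subsets topology and p ∈ ℙ. Then ⊩_p |ℕ̂(p)| < |P(ℕ)^(p)| < |P(P(ℕ))^(p)|: it is forced at p that there is an injective function from ℕ̂(p) into P(ℕ)^(p) and one from P(ℕ)^(p) into P(P(ℕ))^(p), while no function from (ℕ×P(ℕ))^(p) is forced to be onto and no function from P(ℕ)^(p) × P(P(ℕ))^(p) is forced to be onto. -/

import Mathlib

set_option linter.unusedVariables false

noncomputable section

/-- Names for the cumulative hierarchy of variable sets over a partial order `P`:
a name based at `p` assigns to every `q` a family of names (intended to be based at `q`). -/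
inductive VName (P : Type) : Type 1
  | mk (base : P) (ι : P → Type) (el : ∀ q : P, ι q → VName P)

namespace VName

variable {P : Type}

/-- The base node of a name. -/
def base : VName P → P
  | mk p _ _ => p

/-- Restriction `f ↾ [r)` of a name to the cone above `r`. -/
def restrictN [Preorder P] : VName P → P → VName P
  | mk _ ι el, r => mk r (fun q => ι q × PLift (r ≤ q)) (fun q x => el q x.1)

/-- Extensional (hereditary) equality of names: this is the equality of the variable
sets (set valued functions on `[p)`) that the names denote. -/
def Equiv : VName P → VName P → Prop
  | mk p ι el, mk p' ι' el' =>
      p = p' ∧ ∀ q : P, (∀ i : ι q, ∃ j : ι' q, Equiv (el q i) (el' q j)) ∧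
        (∀ j : ι' q, ∃ i : ι q, Equiv (el q i) (el' q j))

theorem Equiv.refl : ∀ a : VName P, Equiv a a
  | mk _ ι el => ⟨rfl, fun q => ⟨fun i => ⟨i, Equiv.refl (el q i)⟩,
      fun j => ⟨j, Equiv.refl (el q j)⟩⟩⟩

theorem Equiv.symm : ∀ {a b : VName P}, Equiv a b → Equiv b a
  | mk _ _ el, mk _ _ el', ⟨hp, h⟩ =>
      ⟨hp.symm, fun q =>
        ⟨fun j => let ⟨i, hi⟩ := (h q).2 j; ⟨i, Equiv.symm hi⟩,
         fun i => let ⟨j, hj⟩ := (h q).1 i; ⟨j, Equiv.symm hj⟩⟩⟩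

theorem Equiv.trans : ∀ {a b c : VName P}, Equiv a b → Equiv b c → Equiv a c
  | mk _ _ el, mk _ _ el', mk _ _ el'', ⟨hp, h⟩, ⟨hp', h'⟩ =>
      ⟨hp.trans hp', fun q =>
        ⟨fun i => let ⟨j, hj⟩ := (h q).1 i; let ⟨k, hk⟩ := (h' q).1 j; ⟨k, Equiv.trans hj hk⟩,
         fun k => let ⟨j, hj⟩ := (h' q).2 k; let ⟨i, hi⟩ := (h q).2 j; ⟨i, Equiv.trans hi hj⟩⟩⟩

instance setoid (P : Type) : Setoid (VName P) :=
  ⟨Equiv, Equiv.refl, Equiv.symm, Equiv.trans⟩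

end VName

/-- Variable sets over `P`: names modulo extensional equality. -/
abbrev VSet (P : Type) : Type 1 := Quotient (VName.setoid P)

namespace VSet

variable {P : Type}

/-- The base node. -/
def base : VSet P → P :=
  Quotient.lift VName.base (fun a b h => by cases a; cases b; exact h.1)

/-- The value of a name at a node, as a set of variable sets. -/
def elemsN : VName P → P → Set (VSet P)
  | .mk _ ι el, q => Set.range fun i : ι q => (⟦el q i⟧ : VSet P)

theorem elemsN_congr : ∀ {a b : VName P}, VName.Equiv a b → elemsN a = elemsN b
  | .mk _ ι el, .mk _ ι' el', ⟨_, h⟩ => by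
      funext q
      ext x
      constructor
      · rintro ⟨i, rfl⟩
        obtain ⟨j, hj⟩ := (h q).1 i
        exact ⟨j, (Quotient.sound hj).symm⟩
      · rintro ⟨j, rfl⟩
        obtain ⟨i, hi⟩ := (h q).2 j
        exact ⟨i, Quotient.sound hi⟩

/-- `f.elems q` is the value `f(q)` of the variable set `f` at the node `q`. -/
def elems : VSet P → P → Set (VSet P) :=
  Quotient.lift elemsN fun _ _ h => elemsN_congr h

theorem restrictN_congr [Preorder P] (r : P) :
    ∀ {a b : VName P}, VName.Equiv a b → VName.Equiv (a.restrictN r) (b.restrictN r)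
  | .mk _ _ el, .mk _ _ el', ⟨_, h⟩ =>
      ⟨rfl, fun q =>
        ⟨fun i => let ⟨j, hj⟩ := (h q).1 i.1; ⟨⟨j, i.2⟩, hj⟩,
         fun j => let ⟨i, hi⟩ := (h q).2 j.1; ⟨⟨i, j.2⟩, hi⟩⟩⟩

/-- Restriction `f ↾ [r)`. -/
def restrict [Preorder P] (f : VSet P) (r : P) : VSet P :=
  Quotient.lift (fun a : VName P => (⟦a.restrictN r⟧ : VSet P))
    (fun _ _ h => Quotient.sound (restrictN_congr r h)) f

end VSet

namespace VName

variable {P : Type}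

/-- A name is *good* if it denotes an element of the cumulative hierarchy of variable
sets: its value at each `q` consists of good names based at `q`, it has empty value
outside of the cone of its base, and it is coherent under restrictions
(`g ∈ f(q)` and `q ≤ r` imply `g ↾ [r) ∈ f(r)`). -/
def GoodN [Preorder P] : VName P → Prop
  | .mk p ι el =>
      (∀ q : P, Nonempty (ι q) → p ≤ q) ∧
      (∀ (q : P) (i : ι q), (el q i).base = q ∧ GoodN (el q i)) ∧
      (∀ (q : P) (i : ι q) (r : P), q ≤ r →
        ∃ j : ι r, VName.Equiv ((el q i).restrictN r) (el r j))

end VName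

/-- `Vp p` is the universe `V(p) = ⋃_α V_α(p)` of variable sets at the node `p`. -/
def Vp {P : Type} [Preorder P] (p : P) : Set (VSet P) :=
  {f | ∃ a : VName P, VName.GoodN a ∧ a.base = p ∧ ⟦a⟧ = f}

/-- Membership forced at `p`: `⊩ₚ a ∈ f` iff `a ∈ f(p)`. -/
def memAt {P : Type} [Preorder P] (p : P) (a f : VSet P) : Prop := a ∈ f.elems p

namespace VSet

variable {P : Type}

/-- Internal unordered pair `{a, b}` based at `q` (name level). -/
def upairN [Preorder P] (q : P) (a b : VName P) : VName P :=
  .mk q (fun r => Bool × PLift (q ≤ r))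
    (fun r x => if x.1 then a.restrictN r else b.restrictN r)

/-- Internal (Kuratowski) ordered pair `(a, b)` based at `q` (name level);
its value at `r` is `{{a}↾[r), {a,b}↾[r)}`. -/
def pairN [Preorder P] (q : P) (a b : VName P) : VName P :=
  .mk q (fun r => Bool × PLift (q ≤ r))
    (fun r x => if x.1 then (upairN q a a).restrictN r else (upairN q a b).restrictN r)

/-- Internal ordered pair `(a, b)` based at `q`. -/
def pairV [Preorder P] (q : P) (a b : VSet P) : VSet P := ⟦pairN q a.out b.out⟧

/-- Internal cartesian product (name level): `(f × g)(r) = {(a,b) : a ∈ f(r), b ∈ g(r)}`. -/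
def prodN [Preorder P] (q : P) : VName P → VName P → VName P
  | .mk _ ι el, .mk _ ι' el' =>
      .mk q (fun r => (ι r × ι' r) × PLift (q ≤ r))
        (fun r x => pairN r (el r x.1.1) (el' r x.1.2))

/-- Internal cartesian product `A × B` based at `q`. -/
def prodV [Preorder P] (q : P) (A B : VSet P) : VSet P := ⟦prodN q A.out B.out⟧

/-- Internal successor (name level): `Suc(f)(q) = {f↾[q)} ∪ f(q)`. -/
def sucN [Preorder P] : VName P → VName P
  | .mk p ι el =>
      .mk p (fun q => ι q ⊕ PLift (p ≤ q))
        (fun q x => Sum.elim (el q) (fun _ => (VName.mk p ι el).restrictN q) x)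

/-- Internal successor `Suc(f)`. -/
def sucV [Preorder P] (f : VSet P) : VSet P := ⟦sucN f.out⟧

/-- The name `â(p)` of an external set (given by a `PSet`): `â(p)(q) = {b̂(q) : b ∈ a}`. -/
def hatN [Preorder P] : PSet → P → VName P
  | ⟨_, A⟩, p => .mk p (fun q => _ × PLift (p ≤ q)) (fun q x => hatN (A x.1) q)

/-- The variable set `â(p)` associated to an external set `a`. -/
def hatV [Preorder P] (a : ZFSet) (p : P) : VSet P := ⟦hatN a.out p⟧

end VSet

/-- The von Neumann natural `n` as a `ZFSet`. -/
def natToZF : ℕ → ZFSet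
  | 0 => ∅
  | n + 1 => insert (natToZF n) (natToZF n)


/-- First-order formulas of set theory (with de Bruijn variables `Fin n`), together
with an ordered-pair atom `isPair i j k` ("xᵢ = (xⱼ, xₖ)") and a pair-membership atom
`pairMem i j k` ("(xᵢ, xⱼ) ∈ xₖ"). -/
inductive SetFml : ℕ → Type
  | mem {n} (i j : Fin n) : SetFml n
  | eq {n} (i j : Fin n) : SetFml n
  | isPair {n} (i j k : Fin n) : SetFml n
  | pairMem {n} (i j k : Fin n) : SetFml n
  | and {n} (f g : SetFml n) : SetFml n
  | or {n} (f g : SetFml n) : SetFml n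
  | imp {n} (f g : SetFml n) : SetFml n
  | not {n} (f : SetFml n) : SetFml n
  | ex {n} (f : SetFml (n + 1)) : SetFml n
  | all {n} (f : SetFml (n + 1)) : SetFml n

namespace SetFml

/-- Biconditional. -/
def iff {n} (f g : SetFml n) : SetFml n := .and (.imp f g) (.imp g f)

/-- Relabelling of free variables (weakening/substitution of variables). -/
def relabel : ∀ {n m : ℕ}, (Fin n → Fin m) → SetFml n → SetFml m
  | _, _, g, .mem i j => .mem (g i) (g j)
  | _, _, g, .eq i j => .eq (g i) (g j)
  | _, _, g, .isPair i j k => .isPair (g i) (g j) (g k)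
  | _, _, g, .pairMem i j k => .pairMem (g i) (g j) (g k)
  | _, _, g, .and f₁ f₂ => .and (relabel g f₁) (relabel g f₂)
  | _, _, g, .or f₁ f₂ => .or (relabel g f₁) (relabel g f₂)
  | _, _, g, .imp f₁ f₂ => .imp (relabel g f₁) (relabel g f₂)
  | _, _, g, .not f => .not (relabel g f)
  | _, _, g, .ex f => .ex (relabel (Fin.cases 0 fun i => (g i).succ) f)
  | _, _, g, .all f => .all (relabel (Fin.cases 0 fun i => (g i).succ) f)

/-- Universal closure of a formula. -/
def closeAll : ∀ {n : ℕ}, SetFml n → SetFml 0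
  | 0, f => f
  | _ + 1, f => closeAll (.all f)

/-- Classical realization of a set-theoretic formula in a structure `(M, E)`. -/
def RealizeIn {M : Type*} (E : M → M → Prop) : ∀ {n}, SetFml n → (Fin n → M) → Prop
  | _, .mem i j, v => E (v i) (v j)
  | _, .eq i j, v => v i = v j
  | _, .isPair i j k, v =>
      ∀ u, E u (v i) ↔ ((∀ t, E t u ↔ t = v j) ∨ (∀ t, E t u ↔ (t = v j ∨ t = v k)))
  | _, .pairMem i j k, v =>
      ∃ w, E w (v k) ∧
        ∀ u, E u w ↔ ((∀ t, E t u ↔ t = v i) ∨ (∀ t, E t u ↔ (t = v i ∨ t = v j)))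
  | _, .and f g, v => RealizeIn E f v ∧ RealizeIn E g v
  | _, .or f g, v => RealizeIn E f v ∨ RealizeIn E g v
  | _, .imp f g, v => RealizeIn E f v → RealizeIn E g v
  | _, .not f, v => ¬ RealizeIn E f v
  | _, .ex f, v => ∃ a, RealizeIn E f (Fin.cons a v)
  | _, .all f, v => ∀ a, RealizeIn E f (Fin.cons a v)

end SetFml

/-- The sheaf forcing relation `⊩ₚ φ[σ₁,…,σₙ]` over the topology of hereditary
(upward closed) subsets of `P`: since `[p)` is the least open neighbourhood of `p`,
`¬`, `→`, `∀` are evaluated over all `q ≥ p`, and `∃` is witnessed in `V(p)`. -/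
def Forces {P : Type} [Preorder P] : ∀ {n : ℕ}, P → SetFml n → (Fin n → VSet P) → Prop
  | _, p, .mem i j, s => s i ∈ (s j).elems p
  | _, p, .eq i j, s => s i = s j
  | _, p, .isPair i j k, s => s i = VSet.pairV p (s j) (s k)
  | _, p, .pairMem i j k, s => VSet.pairV p (s i) (s j) ∈ (s k).elems p
  | _, p, .and f g, s => Forces p f s ∧ Forces p g s
  | _, p, .or f g, s => Forces p f s ∨ Forces p g s
  | _, p, .imp f g, s => ∀ q : P, p ≤ q →
      Forces q f (fun i => (s i).restrict q) → Forces q g (fun i => (s i).restrict q)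
  | _, p, .not f, s => ∀ q : P, p ≤ q → ¬ Forces q f (fun i => (s i).restrict q)
  | _, p, .ex f, s => ∃ σ ∈ Vp p, Forces p f (Fin.cons σ s)
  | _, p, .all f, s => ∀ q : P, p ≤ q → ∀ σ ∈ Vp q,
      Forces q f (Fin.cons σ fun i => (s i).restrict q)


namespace SetFml

/-- `xᵢ ⊆ xⱼ`. -/
def fSub {n} (i j : Fin n) : SetFml n := .all (.imp (.mem 0 i.succ) (.mem 0 j.succ))

/-- "`x_f` is a set of ordered pairs and is single valued" (`f` is a function). -/
def fIsFunction {n} (f : Fin n) : SetFml n :=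
  .and (.all (.imp (.mem 0 f.succ) (.ex (.ex (.isPair 2 1 0)))))
    (.all (.all (.all (.imp
      (.and (.pairMem 2 1 f.succ.succ.succ) (.pairMem 2 0 f.succ.succ.succ)) (.eq 1 0)))))

/-- "`x_f` is defined on every element of `x_a`". -/
def fTotal {n} (f a : Fin n) : SetFml n :=
  .all (.imp (.mem 0 a.succ) (.ex (.pairMem 1 0 f.succ.succ)))

/-- "`x_f` is onto `x_b`". -/
def fOnto {n} (f b : Fin n) : SetFml n :=
  .all (.imp (.mem 0 b.succ) (.ex (.pairMem 0 1 f.succ.succ)))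

/-- "`x_f` is injective". -/
def fInjective {n} (f : Fin n) : SetFml n :=
  .all (.all (.all (.imp
    (.and (.pairMem 2 0 f.succ.succ.succ) (.pairMem 1 0 f.succ.succ.succ)) (.eq 2 1))))

/-- "`x_f` is a function from `x_a` to `x_b`". -/
def fFuncFromTo {n} (f a b : Fin n) : SetFml n :=
  .and (.all (.imp (.mem 0 f.succ) (.ex (.ex (.and (.mem 1 a.succ.succ.succ)
      (.and (.mem 0 b.succ.succ.succ) (.isPair 2 1 0)))))))
    (.and (.all (.all (.all (.imp
        (.and (.pairMem 2 1 f.succ.succ.succ) (.pairMem 2 0 f.succ.succ.succ)) (.eq 1 0)))))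
      (fTotal f a))

/-- "`x_f` is an injective function from `x_a` to `x_b`". -/
def fInjFromTo {n} (f a b : Fin n) : SetFml n := .and (fFuncFromTo f a b) (fInjective f)

/-- "`x_f` is a surjective function from `x_a` onto `x_b`". -/
def fSurjFromTo {n} (f a b : Fin n) : SetFml n := .and (fFuncFromTo f a b) (fOnto f b)

/-- `|x_a| < |x_b|`: there is an injective function from `x_a` to `x_b` and
no surjective function from `x_a` onto `x_b`. -/
def fCardLt {n} (a b : Fin n) : SetFml n :=
  .and (.ex (fInjFromTo 0 a.succ b.succ)) (.not (.ex (fSurjFromTo 0 a.succ b.succ)))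

/-- "`x_S` is an inductive set" (contains the empty set, closed under successor). -/
def fInductive {n} (S : Fin n) : SetFml n :=
  .and (.ex (.and (.mem 0 S.succ) (.all (.not (.mem 0 1)))))
    (.all (.imp (.mem 0 S.succ) (.ex (.and (.mem 0 S.succ.succ)
      (.all (.iff (.mem 0 1) (.or (.mem 0 2) (.eq 0 2))))))))

/-- "`x_N` is the set of natural numbers" (the least inductive set). -/
def fIsNat {n} (N : Fin n) : SetFml n :=
  .and (fInductive N) (.all (.imp (fInductive 0) (fSub N.succ 0)))

/-- "`x_pw` is the power set of `x_x`". -/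
def fIsPow {n} (pw x : Fin n) : SetFml n := .all (.iff (.mem 0 pw.succ) (fSub 0 x.succ))

/-- `¬CH`: there is a set `B` with `|ℕ| < |B| < |P(ℕ)|`. -/
def negCHFml : SetFml 0 :=
  .ex (.ex (.ex (.and (fIsNat 2)
    (.and (fIsPow 1 2) (.and (fCardLt 2 0) (fCardLt 0 1))))))

/-! The axioms of `ZFC` as sentences (the axiom of foundation in its `¬¬` form and
the axiom of choice in the form `∀𝓕(∀x∀y φ → ¬¬ψ*)`). -/

/-- Axiom of existence of the empty set: `∃x∀y ¬(y ∈ x)`. -/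
def existsEmptyAx : SetFml 0 := .ex (.all (.not (.mem 0 1)))

/-- Axiom of extensionality: `∀x∀y(∀z(z ∈ x ↔ z ∈ y) → x = y)`. -/
def extAx : SetFml 0 :=
  .all (.all (.imp (.all (.iff (.mem 0 2) (.mem 0 1))) (.eq 1 0)))

/-- Axiom of pairing: `∀x∀y∃z∀w(w ∈ z ↔ (w = x ∨ w = y))`. -/
def pairAx : SetFml 0 :=
  .all (.all (.ex (.all (.iff (.mem 0 1) (.or (.eq 0 3) (.eq 0 2))))))

/-- Axiom of union: `∀𝓕∃A∀x(x ∈ A ↔ ∃Y(Y ∈ 𝓕 ∧ x ∈ Y))`. -/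
def unionAx : SetFml 0 :=
  .all (.ex (.all (.iff (.mem 0 1) (.ex (.and (.mem 0 3) (.mem 1 0))))))

/-- Axiom of power set: `∀x∃y∀z(z ∈ y ↔ ∀w(w ∈ z → w ∈ x))`. -/
def powAx : SetFml 0 :=
  .all (.ex (.all (.iff (.mem 0 1) (.all (.imp (.mem 0 1) (.mem 0 3))))))

/-- Axiom of infinity: there exists an inductive set. -/
def infAx : SetFml 0 :=
  .ex (.and (.ex (.and (.mem 0 1) (.all (.not (.mem 0 1)))))
    (.all (.imp (.mem 0 1) (.ex (.and (.mem 0 2)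
      (.all (.iff (.mem 0 1) (.or (.mem 0 2) (.eq 0 2)))))))))

/-- The matrix `x ∈ y ↔ (x ∈ z ∧ φ(x,z,w₁,…,wₙ))` of the comprehension axiom, in the
context `0 = x, 1 = y, 2 = z, 3+i = wᵢ`. -/
def compInner {n} (φ : SetFml (n + 2)) : SetFml (n + 3) :=
  .iff (.mem 0 1) (.and (.mem 0 2)
    (φ.relabel (Fin.cases 0 (Fin.cases 2 fun j => j.succ.succ.succ))))

/-- The comprehension axiom for `φ(x,z,w₁,…,wₙ)` (free variables `0 = x, 1 = z,
2+i = wᵢ`): `∀z∀w₁…∀wₙ∃y∀x(x ∈ y ↔ (x ∈ z ∧ φ))`. -/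
def compAx {n} (φ : SetFml (n + 2)) : SetFml 0 :=
  closeAll (.ex (.all (compInner φ)))

/-- `∀x(x ∈ A → ∃!y φ(x,y,A,w₁,…,wₙ))`, in the context `0 = A, 1+i = wᵢ`;
`φ` has free variables `0 = x, 1 = y, 2 = A, 3+i = wᵢ`. -/
def replHyp {n} (φ : SetFml (n + 3)) : SetFml (n + 1) :=
  .all (.imp (.mem 0 1) (.ex (.and
    (φ.relabel (Fin.cases 1 (Fin.cases 0 (Fin.cases 2 fun j => j.succ.succ.succ))))
    (.all (.imp
      (φ.relabel (Fin.cases 2 (Fin.cases 0 (Fin.cases 3 fun j => j.succ.succ.succ.succ))))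
      (.eq 0 1))))))

/-- `∃Y∀x(x ∈ A → ∃y(y ∈ Y ∧ φ(x,y,A,w⃗)))`, in the context `0 = A, 1+i = wᵢ`. -/
def replConcl {n} (φ : SetFml (n + 3)) : SetFml (n + 1) :=
  .ex (.all (.imp (.mem 0 2) (.ex (.and (.mem 0 2)
    (φ.relabel (Fin.cases 1 (Fin.cases 0 (Fin.cases 3 fun j => j.succ.succ.succ.succ))))))))

/-- The replacement axiom for `φ(x,y,A,w₁,…,wₙ)`. -/
def replAx {n} (φ : SetFml (n + 3)) : SetFml 0 :=
  closeAll (.imp (replHyp φ) (replConcl φ))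

/-- The axiom of foundation, in the (classically equivalent) `¬¬` form:
`¬∃x ¬(∃y(y ∈ x) → ∃y(y ∈ x ∧ ¬∃z(z ∈ x ∧ z ∈ y)))`. -/
def foundAx : SetFml 0 :=
  .not (.ex (.not (.imp (.ex (.mem 0 1))
    (.ex (.and (.mem 0 1) (.not (.ex (.and (.mem 0 2) (.mem 0 1)))))))))

/-- `φ := (x ∈ 𝓕 ∧ y ∈ 𝓕 → ((∃z(z ∈ x ∧ z ∈ y) → x = y) ∧ ∃z(z ∈ x)))`,
in the context `0 = y, 1 = x, 2 = 𝓕`. -/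
def acPhi : SetFml 3 :=
  .imp (.and (.mem 1 2) (.mem 0 2))
    (.and (.imp (.ex (.and (.mem 0 2) (.mem 0 1))) (.eq 1 0)) (.ex (.mem 0 2)))

/-- `ψ* := ∃E(x ∈ 𝓕 → ∃a(a ∈ E ∧ a ∈ x ∧ ∀b(b ∈ E ∧ b ∈ x → ¬¬(b = a))))`,
in the context `0 = y, 1 = x, 2 = 𝓕`. -/
def acPsiStar : SetFml 3 :=
  .ex (.imp (.mem 2 3) (.ex (.and (.mem 0 1) (.and (.mem 0 3)
    (.all (.imp (.and (.mem 0 2) (.mem 0 4)) (.not (.not (.eq 0 1)))))))))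

/-- The axiom of choice in the form `∀𝓕∀x∀y(φ → ¬¬ψ*)`. -/
def acAx : SetFml 0 := .all (.all (.all (.imp acPhi (.not (.not acPsiStar)))))

end SetFml


/-!
Hatted sets reflect ZF at every node: the value of `â(q)` at `q` consists exactly of the `b̂(q)`
with `b ∈ a`, the internal ordered pair of `b̂(q)` and `ĉ(q)` is `(b, c)^(q)`, and `x ↦ x̂(q)` is
injective. So the hatted graph of `x ↦ {x}` is forced to be an injection of `â` into `P(a)^`.
On the other hand, a function `σ ⊆ (a × P(a))^(q)` forced onto `P(a)^(q)`, read at the single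
node `q`, is a single-valued relation from `a` onto `P(a)`, which Cantor's diagonal argument
excludes.
-/

theorem ZFSet.exists_mem_powerset_forall_not_rel (A : ZFSet) (R : ZFSet → ZFSet → Prop)
    (hR : ∀ x y y', R x y → R x y' → y = y') : ∃ B ∈ A.powerset, ∀ x ∈ A, ¬ R x B := by
  set D := ZFSet.sep (fun x => ∀ y, R x y → x ∉ y) A
  refine ⟨D, ZFSet.mem_powerset.2 fun x hx => (ZFSet.mem_sep.1 hx).1, fun x hx hxD => ?_⟩
  by_cases h : x ∈ D
  · exact (ZFSet.mem_sep.1 h).2 D hxD h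
  · exact h (ZFSet.mem_sep.2 ⟨hx, fun y hy => hR x D y hxD hy ▸ h⟩)

theorem ZFSet.IsFunc.eq_of_pair_mem {A B F x y y' : ZFSet} (hF : A.IsFunc B F)
    (hy : x.pair y ∈ F) (hy' : x.pair y' ∈ F) : y = y' :=
  (hF.2 x (ZFSet.pair_mem_prod.1 (hF.1 hy)).1).unique hy hy'

namespace VSet

variable {P : Type}

theorem ext {f g : VSet P} (hb : f.base = g.base) (he : ∀ q, f.elems q = g.elems q) :
    f = g := by
  induction f using Quotient.inductionOn with | h a =>
  induction g using Quotient.inductionOn with | h b =>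
  obtain ⟨p, ι, el⟩ := a
  obtain ⟨p', ι', el'⟩ := b
  refine Quotient.sound ⟨hb, fun q => ⟨fun i => ?_, fun j => ?_⟩⟩
  · obtain ⟨j, hj⟩ : (⟦el q i⟧ : VSet P) ∈ elems ⟦.mk p' ι' el'⟧ q := he q ▸ ⟨i, rfl⟩
    exact ⟨j, Quotient.exact hj.symm⟩
  · obtain ⟨i, hi⟩ : (⟦el' q j⟧ : VSet P) ∈ elems ⟦.mk p ι el⟧ q := (he q).symm ▸ ⟨j, rfl⟩
    exact ⟨i, Quotient.exact hi⟩

variable [Preorder P]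

theorem base_restrict (f : VSet P) (r : P) : (f.restrict r).base = r := by
  induction f using Quotient.inductionOn with | h a => cases a; rfl

theorem elems_restrict_of_le {r q : P} (h : r ≤ q) (f : VSet P) :
    (f.restrict r).elems q = f.elems q := by
  induction f using Quotient.inductionOn with | h a =>
  obtain ⟨p, ι, el⟩ := a
  ext x
  exact ⟨fun ⟨i, hi⟩ => ⟨i.1, hi⟩, fun ⟨i, hi⟩ => ⟨⟨i, PLift.up h⟩, hi⟩⟩

theorem elems_restrict_of_not_le {r q : P} (h : ¬ r ≤ q) (f : VSet P) :
    (f.restrict r).elems q = ∅ := by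
  induction f using Quotient.inductionOn with | h a =>
  obtain ⟨p, ι, el⟩ := a
  exact Set.eq_empty_iff_forall_notMem.2 fun _ ⟨i, _⟩ => h i.2.down

theorem restrict_restrict {t r : P} (h : t ≤ r) (f : VSet P) :
    (f.restrict t).restrict r = f.restrict r := by
  refine ext (by rw [base_restrict, base_restrict]) fun q => ?_
  by_cases hr : r ≤ q
  · rw [elems_restrict_of_le hr, elems_restrict_of_le hr, elems_restrict_of_le (h.trans hr)]
  · rw [elems_restrict_of_not_le hr, elems_restrict_of_not_le hr]

theorem restrict_finCons {n : ℕ} (r : P) (x : VSet P) (s : Fin n → VSet P) :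
    (fun i => ((Fin.cons x s : Fin (n + 1) → VSet P) i).restrict r)
      = Fin.cons (x.restrict r) fun i => (s i).restrict r :=
  funext fun i => Fin.cases rfl (fun _ => rfl) i

end VSet

namespace VName

variable {P : Type} [Preorder P]

theorem base_restrictN (a : VName P) (r : P) : (a.restrictN r).base = r := by
  cases a; rfl

theorem GoodN.restrictN {a : VName P} (ha : a.GoodN) (r : P) : (a.restrictN r).GoodN := by
  obtain ⟨p, ι, el⟩ := a
  obtain ⟨-, hel, hcoh⟩ := ha
  refine ⟨fun q ⟨i⟩ => i.2.down, fun q i => hel q i.1, fun q i r' hr => ?_⟩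
  obtain ⟨j, hj⟩ := hcoh q i.1 r' hr
  exact ⟨⟨j, PLift.up (i.2.down.trans hr)⟩, hj⟩

end VName

namespace VSet

variable {P : Type} [Preorder P] {q r : P} {f : VSet P}

theorem base_of_mem_Vp (hf : f ∈ Vp q) : f.base = q := by
  obtain ⟨a, -, hb, rfl⟩ := hf
  exact hb

theorem elems_eq_empty_of_mem_Vp {s : P} (hf : f ∈ Vp q) (h : ¬ q ≤ s) : f.elems s = ∅ := by
  obtain ⟨⟨p, ι, el⟩, ha, rfl, rfl⟩ := hf
  exact Set.eq_empty_iff_forall_notMem.2 fun _ ⟨i, _⟩ => h (ha.1 s ⟨i⟩)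

theorem restrict_eq_self_of_mem_Vp (hf : f ∈ Vp q) : f.restrict q = f := by
  refine ext (by rw [base_restrict, base_of_mem_Vp hf]) fun s => ?_
  by_cases h : q ≤ s
  · rw [elems_restrict_of_le h]
  · rw [elems_restrict_of_not_le h, elems_eq_empty_of_mem_Vp hf h]

theorem restrict_mem_Vp (hf : f ∈ Vp q) : f.restrict r ∈ Vp r := by
  obtain ⟨a, ha, -, rfl⟩ := hf
  exact ⟨a.restrictN r, ha.restrictN r, a.base_restrictN r, rfl⟩

theorem finCons_mem_Vp {n : ℕ} {x : VSet P} {s : Fin n → VSet P} (hx : x ∈ Vp q)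
    (hs : ∀ i, s i ∈ Vp q) : ∀ i, (Fin.cons x s : Fin (n + 1) → VSet P) i ∈ Vp q :=
  fun i => Fin.cases hx hs i

end VSet

namespace VSet

variable {P : Type} [Preorder P]

def hatPSet (x : PSet) (p : P) : VSet P := ⟦hatN x p⟧

theorem base_hatN (x : PSet) (p : P) : (hatN x p).base = p := by cases x; rfl

theorem base_hatPSet (x : PSet) (p : P) : (hatPSet x p).base = p := base_hatN x p

theorem elems_hatPSet_of_le {p q : P} (h : p ≤ q) (x : PSet) :
    (hatPSet x p).elems q = Set.range fun i => hatPSet (x.Func i) q := by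
  obtain ⟨α, A⟩ := x
  ext y
  exact ⟨fun ⟨i, hi⟩ => ⟨i.1, hi⟩, fun ⟨i, hi⟩ => ⟨⟨i, PLift.up h⟩, hi⟩⟩

theorem elems_hatPSet_of_not_le {p q : P} (h : ¬ p ≤ q) (x : PSet) :
    (hatPSet x p).elems q = ∅ := by
  obtain ⟨α, A⟩ := x
  exact Set.eq_empty_iff_forall_notMem.2 fun _ ⟨i, _⟩ => h i.2.down

theorem hatPSet_restrict {p r : P} (h : p ≤ r) (x : PSet) :
    (hatPSet x p).restrict r = hatPSet x r := by
  refine ext (by rw [base_restrict, base_hatPSet]) fun q => ?_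
  by_cases hr : r ≤ q
  · rw [elems_restrict_of_le hr, elems_hatPSet_of_le (h.trans hr), elems_hatPSet_of_le hr]
  · rw [elems_restrict_of_not_le hr, elems_hatPSet_of_not_le hr]

theorem hatPSet_eq_iff : ∀ {x y : PSet} {p : P}, hatPSet x p = hatPSet y p ↔ x.Equiv y
  | ⟨α, A⟩, ⟨β, B⟩, p => by
    constructor
    · intro h
      have he := congrArg (elems · p) h
      simp only [elems_hatPSet_of_le le_rfl] at he
      refine ⟨fun i => ?_, fun j => ?_⟩
      · obtain ⟨j, hj⟩ := he ▸ Set.mem_range_self (f := fun i => hatPSet (A i) p) i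
        exact ⟨j, hatPSet_eq_iff.1 hj.symm⟩
      · obtain ⟨i, hi⟩ := he.symm ▸ Set.mem_range_self (f := fun j => hatPSet (B j) p) j
        exact ⟨i, hatPSet_eq_iff.1 hi⟩
    · intro h
      refine ext (by rw [base_hatPSet, base_hatPSet]) fun q => ?_
      by_cases hq : p ≤ q
      · rw [elems_hatPSet_of_le hq, elems_hatPSet_of_le hq]
        ext z
        constructor
        · rintro ⟨i, rfl⟩
          obtain ⟨j, hj⟩ := h.1 i
          exact ⟨j, (hatPSet_eq_iff.2 hj).symm⟩
        · rintro ⟨j, rfl⟩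
          obtain ⟨i, hi⟩ := h.2 j
          exact ⟨i, hatPSet_eq_iff.2 hi⟩
      · rw [elems_hatPSet_of_not_le hq, elems_hatPSet_of_not_le hq]

theorem hatV_mk (x : PSet) (p : P) : hatV (ZFSet.mk x) p = hatPSet x p :=
  hatPSet_eq_iff.2 (Quotient.mk_out x)

theorem base_hatV (a : ZFSet) (p : P) : (hatV a p).base = p := base_hatPSet a.out p

theorem mem_elems_hatV {p q : P} (h : p ≤ q) {a : ZFSet} {y : VSet P} :
    y ∈ (hatV a p).elems q ↔ ∃ b ∈ a, hatV b q = y := by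
  induction a using Quotient.inductionOn with | h x =>
  rw [ZFSet.mk_eq, hatV_mk, elems_hatPSet_of_le h]
  constructor
  · rintro ⟨i, rfl⟩
    exact ⟨ZFSet.mk (x.Func i), ZFSet.mk_mem_iff.2 (PSet.func_mem x i), hatV_mk _ q⟩
  · rintro ⟨b, hb, rfl⟩
    induction b using Quotient.inductionOn with | h z =>
    obtain ⟨i, hi⟩ := ZFSet.mk_mem_iff.1 hb
    exact ⟨i, by rw [ZFSet.mk_eq, hatV_mk, hatPSet_eq_iff.2 hi]⟩

theorem elems_hatV_of_not_le {p q : P} (h : ¬ p ≤ q) (a : ZFSet) :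
    (hatV a p).elems q = ∅ := elems_hatPSet_of_not_le h a.out

theorem hatV_restrict {p r : P} (h : p ≤ r) (a : ZFSet) : (hatV a p).restrict r = hatV a r :=
  hatPSet_restrict h a.out

theorem hatV_inj {a b : ZFSet} {p : P} : hatV a p = hatV b p ↔ a = b := by
  rw [← ZFSet.mk_out a, ← ZFSet.mk_out b, hatV_mk, hatV_mk, hatPSet_eq_iff]
  exact ⟨ZFSet.sound, ZFSet.exact⟩

end VSet

theorem VName.goodN_hatN {P : Type} [Preorder P] : ∀ (x : PSet) (p : P), (VSet.hatN x p).GoodN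
  | ⟨α, A⟩, p =>
    ⟨fun q ⟨i⟩ => i.2.down, fun q i => ⟨VSet.base_hatN _ _, goodN_hatN (A i.1) q⟩,
      fun q i r hr => ⟨⟨i.1, PLift.up (i.2.down.trans hr)⟩,
        Quotient.exact (VSet.hatPSet_restrict hr (A i.1))⟩⟩

theorem VSet.hatV_mem_Vp {P : Type} [Preorder P] (a : ZFSet) (p : P) : hatV a p ∈ Vp p :=
  ⟨hatN a.out p, VName.goodN_hatN a.out p, base_hatN a.out p, rfl⟩

namespace VSet

variable {P : Type} [Preorder P]

def upairV (t : P) (X Y : VSet P) : VSet P := ⟦upairN t X.out Y.out⟧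

theorem elemsN_upairN_of_le {t s : P} (h : t ≤ s) (a b : VName P) :
    elemsN (upairN t a b) s = {restrict ⟦a⟧ s, restrict ⟦b⟧ s} := by
  ext y
  constructor
  · rintro ⟨⟨_ | _, _⟩, rfl⟩
    exacts [Or.inr rfl, Or.inl rfl]
  · rintro (rfl | rfl)
    exacts [⟨⟨true, PLift.up h⟩, rfl⟩, ⟨⟨false, PLift.up h⟩, rfl⟩]

theorem elemsN_upairN_of_not_le {t s : P} (h : ¬ t ≤ s) (a b : VName P) :
    elemsN (upairN t a b) s = ∅ :=
  Set.eq_empty_iff_forall_notMem.2 fun _ ⟨⟨_, hle⟩, _⟩ => h hle.down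

theorem elems_upairV_of_le {t s : P} (h : t ≤ s) (X Y : VSet P) :
    (upairV t X Y).elems s = {X.restrict s, Y.restrict s} := by
  change elemsN (upairN t X.out Y.out) s = _
  rw [elemsN_upairN_of_le h, Quotient.out_eq, Quotient.out_eq]

theorem elems_upairV_of_not_le {t s : P} (h : ¬ t ≤ s) (X Y : VSet P) :
    (upairV t X Y).elems s = ∅ := elemsN_upairN_of_not_le h _ _

theorem upairV_restrict (t : P) (X Y : VSet P) :
    upairV t (X.restrict t) (Y.restrict t) = upairV t X Y := by
  refine ext rfl fun s => ?_
  by_cases hs : t ≤ s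
  · rw [elems_upairV_of_le hs, elems_upairV_of_le hs, restrict_restrict hs, restrict_restrict hs]
  · rw [elems_upairV_of_not_le hs, elems_upairV_of_not_le hs]

theorem upairV_inj {q : P} {X Y X' Y' : VSet P} (hX : X ∈ Vp q) (hY : Y ∈ Vp q)
    (hX' : X' ∈ Vp q) (hY' : Y' ∈ Vp q) (h : upairV q X Y = upairV q X' Y') :
    X = X' ∧ Y = Y' ∨ X = Y' ∧ Y = X' := by
  have he := congrArg (elems · q) h
  simp only [elems_upairV_of_le le_rfl, restrict_eq_self_of_mem_Vp, hX, hY, hX', hY'] at he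
  exact Set.pair_eq_pair_iff.1 he

theorem mk_restrictN_upairN {q t : P} (h : q ≤ t) (a b : VName P) :
    (⟦(upairN q a b).restrictN t⟧ : VSet P) = upairV t ⟦a⟧ ⟦b⟧ := by
  change restrict ⟦upairN q a b⟧ t = _
  refine ext (by rw [base_restrict]; rfl) fun s => ?_
  by_cases hs : t ≤ s
  · rw [elems_restrict_of_le hs, elems_upairV_of_le hs]
    exact elemsN_upairN_of_le (h.trans hs) a b
  · rw [elems_restrict_of_not_le hs, elems_upairV_of_not_le hs]

theorem elemsN_pairN_of_le {q t : P} (h : q ≤ t) (a b : VName P) :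
    elemsN (pairN q a b) t = {upairV t ⟦a⟧ ⟦a⟧, upairV t ⟦a⟧ ⟦b⟧} := by
  ext y
  constructor
  · rintro ⟨⟨_ | _, _⟩, rfl⟩
    exacts [Or.inr (mk_restrictN_upairN h a b), Or.inl (mk_restrictN_upairN h a a)]
  · rintro (rfl | rfl)
    exacts [⟨⟨true, PLift.up h⟩, mk_restrictN_upairN h a a⟩,
      ⟨⟨false, PLift.up h⟩, mk_restrictN_upairN h a b⟩]

theorem elemsN_pairN_of_not_le {q t : P} (h : ¬ q ≤ t) (a b : VName P) :
    elemsN (pairN q a b) t = ∅ :=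
  Set.eq_empty_iff_forall_notMem.2 fun _ ⟨⟨_, hle⟩, _⟩ => h hle.down

theorem elems_pairV_of_le {q t : P} (h : q ≤ t) (X Y : VSet P) :
    (pairV q X Y).elems t = {upairV t X X, upairV t X Y} := by
  change elemsN (pairN q X.out Y.out) t = _
  rw [elemsN_pairN_of_le h, Quotient.out_eq, Quotient.out_eq]

theorem elems_pairV_of_not_le {q t : P} (h : ¬ q ≤ t) (X Y : VSet P) :
    (pairV q X Y).elems t = ∅ := elemsN_pairN_of_not_le h _ _

theorem pairV_mk (q : P) (a b : VName P) : pairV q ⟦a⟧ ⟦b⟧ = ⟦pairN q a b⟧ := by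
  refine ext rfl fun t => ?_
  change _ = elemsN (pairN q a b) t
  by_cases ht : q ≤ t
  · rw [elems_pairV_of_le ht, elemsN_pairN_of_le ht]
  · rw [elems_pairV_of_not_le ht, elemsN_pairN_of_not_le ht]

theorem pairV_inj {q : P} {X Y X' Y' : VSet P} (hX : X ∈ Vp q) (hY : Y ∈ Vp q)
    (hX' : X' ∈ Vp q) (hY' : Y' ∈ Vp q) : pairV q X Y = pairV q X' Y' ↔ X = X' ∧ Y = Y' := by
  refine ⟨fun h => ?_, fun ⟨hX, hY⟩ => hX ▸ hY ▸ rfl⟩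
  have he := congrArg (elems · q) h
  simp only [elems_pairV_of_le le_rfl] at he
  rcases Set.pair_eq_pair_iff.1 he with ⟨h₁, h₂⟩ | ⟨h₁, h₂⟩
  · have := upairV_inj hX hX hX' hX' h₁
    have := upairV_inj hX hY hX' hY' h₂
    grind
  · have := upairV_inj hX hX hX' hY' h₁
    have := upairV_inj hX hY hX' hX' h₂
    grind

end VSet

namespace VName

variable {P : Type} [Preorder P] {a b : VName P}

theorem GoodN.upairN (ha : a.GoodN) (hb : b.GoodN) (t : P) : (VSet.upairN t a b).GoodN := by
  refine ⟨fun q ⟨i⟩ => i.2.down, fun q ⟨bl, _⟩ => ?_, fun q ⟨bl, hle⟩ r hr =>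
    ⟨⟨bl, PLift.up (hle.down.trans hr)⟩, ?_⟩⟩
  · cases bl
    exacts [⟨b.base_restrictN q, hb.restrictN q⟩, ⟨a.base_restrictN q, ha.restrictN q⟩]
  · cases bl
    exacts [Quotient.exact (VSet.restrict_restrict hr ⟦b⟧),
      Quotient.exact (VSet.restrict_restrict hr ⟦a⟧)]

theorem GoodN.pairN (ha : a.GoodN) (hb : b.GoodN) (q : P) : (VSet.pairN q a b).GoodN := by
  refine ⟨fun t ⟨i⟩ => i.2.down, fun t ⟨bl, _⟩ => ?_, fun t ⟨bl, hle⟩ r hr =>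
    ⟨⟨bl, PLift.up (hle.down.trans hr)⟩, ?_⟩⟩
  · cases bl
    exacts [⟨base_restrictN (VSet.upairN q a b) t, (ha.upairN hb q).restrictN t⟩,
      ⟨base_restrictN (VSet.upairN q a a) t, (ha.upairN ha q).restrictN t⟩]
  · cases bl
    exacts [Quotient.exact (VSet.restrict_restrict hr ⟦VSet.upairN q a b⟧),
      Quotient.exact (VSet.restrict_restrict hr ⟦VSet.upairN q a a⟧)]

end VName

namespace VSet

variable {P : Type} [Preorder P]

theorem pairV_mem_Vp {q : P} {X Y : VSet P} (hX : X ∈ Vp q) (hY : Y ∈ Vp q) :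
    pairV q X Y ∈ Vp q := by
  obtain ⟨a, ha, -, rfl⟩ := hX
  obtain ⟨b, hb, -, rfl⟩ := hY
  exact ⟨pairN q a b, ha.pairN hb q, rfl, (pairV_mk q a b).symm⟩

theorem elems_hatV_insert_of_le {r t : P} (h : r ≤ t) (a b : ZFSet) :
    (hatV {a, b} r).elems t = {hatV a t, hatV b t} := by
  ext y
  simp only [mem_elems_hatV h, ZFSet.mem_pair, Set.mem_insert_iff, Set.mem_singleton_iff]
  grind

theorem hatV_insert (a b : ZFSet) (t : P) : hatV {a, b} t = upairV t (hatV a t) (hatV b t) := by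
  refine ext (base_hatV _ t) fun s => ?_
  by_cases hs : t ≤ s
  · rw [elems_hatV_insert_of_le hs, elems_upairV_of_le hs, hatV_restrict hs, hatV_restrict hs]
  · rw [elems_hatV_of_not_le hs, elems_upairV_of_not_le hs]

theorem upairV_hatV_of_le {r t : P} (h : r ≤ t) (a b : ZFSet) :
    upairV t (hatV a r) (hatV b r) = hatV {a, b} t := by
  rw [← upairV_restrict, hatV_restrict h, hatV_restrict h, hatV_insert]

theorem hatV_pair (a b : ZFSet) (r : P) : hatV (a.pair b) r = pairV r (hatV a r) (hatV b r) := by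
  refine ext (base_hatV _ r) fun t => ?_
  by_cases ht : r ≤ t
  · rw [ZFSet.pair, elems_hatV_insert_of_le ht, elems_pairV_of_le ht, upairV_hatV_of_le ht,
      upairV_hatV_of_le ht, ZFSet.pair_eq_singleton]
  · rw [elems_hatV_of_not_le ht, elems_pairV_of_not_le ht]

theorem pairV_mem_elems_hatV_iff {r : P} {F A B : ZFSet} {X Y : VSet P} (hF : F ⊆ A.prod B)
    (hX : X ∈ Vp r) (hY : Y ∈ Vp r) :
    pairV r X Y ∈ (hatV F r).elems r ↔ ∃ x y, x.pair y ∈ F ∧ X = hatV x r ∧ Y = hatV y r := by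
  rw [mem_elems_hatV le_rfl]
  constructor
  · rintro ⟨z, hz, hzXY⟩
    obtain ⟨x, -, y, -, rfl⟩ := ZFSet.mem_prod.1 (hF hz)
    rw [hatV_pair, pairV_inj (hatV_mem_Vp x r) (hatV_mem_Vp y r) hX hY] at hzXY
    exact ⟨x, y, hz, hzXY.1.symm, hzXY.2.symm⟩
  · rintro ⟨x, y, hxy, rfl, rfl⟩
    exact ⟨_, hxy, hatV_pair x y r⟩

end VSet

namespace Forces

open VSet

variable {P : Type} [Preorder P] {n : ℕ} {q : P} {s : Fin n → VSet P}

theorem imp_apply {φ ψ : SetFml n} (h : Forces q (.imp φ ψ) s) (hs : ∀ i, s i ∈ Vp q)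
    (hφ : Forces q φ s) : Forces q ψ s := by
  have hself : (fun i => (s i).restrict q) = s :=
    funext fun i => restrict_eq_self_of_mem_Vp (hs i)
  simpa only [hself] using h q le_rfl (by simpa only [hself] using hφ)

theorem all_apply {φ : SetFml (n + 1)} {σ : VSet P} (h : Forces q (.all φ) s)
    (hs : ∀ i, s i ∈ Vp q) (hσ : σ ∈ Vp q) : Forces q φ (Fin.cons σ s) := by
  have hself : (fun i => (s i).restrict q) = s :=
    funext fun i => restrict_eq_self_of_mem_Vp (hs i)
  simpa only [hself] using h q le_rfl σ hσ

theorem all_imp_apply {φ ψ : SetFml (n + 1)} {σ : VSet P}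
    (h : Forces q (.all (.imp φ ψ)) s) (hs : ∀ i, s i ∈ Vp q) (hσ : σ ∈ Vp q)
    (hφ : Forces q φ (Fin.cons σ s)) : Forces q ψ (Fin.cons σ s) :=
  (h.all_apply hs hσ).imp_apply (finCons_mem_Vp hσ hs) hφ

theorem all_all_all_imp_apply {φ ψ : SetFml (n + 3)} {X Y Z : VSet P}
    (h : Forces q (.all (.all (.all (.imp φ ψ)))) s) (hs : ∀ i, s i ∈ Vp q)
    (hX : X ∈ Vp q) (hY : Y ∈ Vp q) (hZ : Z ∈ Vp q)
    (hφ : Forces q φ (Fin.cons X (Fin.cons Y (Fin.cons Z s)))) :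
    Forces q ψ (Fin.cons X (Fin.cons Y (Fin.cons Z s))) :=
  have hZs := finCons_mem_Vp hZ hs
  (((h.all_apply hs hZ).all_apply hZs hY).all_imp_apply (finCons_mem_Vp hY hZs) hX hφ)

theorem all_imp_mem_of_hatV {φ : SetFml (n + 1)} {i : Fin n} {A : ZFSet}
    (hs : s i = hatV A q)
    (h : ∀ r, q ≤ r → ∀ x ∈ A, Forces r φ (Fin.cons (hatV x r) fun j => (s j).restrict r)) :
    Forces q (.all (.imp (.mem 0 i.succ) φ)) s := by
  intro q₁ hq₁ Z _ r hr hZ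
  simp only [restrict_finCons, restrict_restrict hr] at hZ ⊢
  change Z.restrict r ∈ ((s i).restrict r).elems r at hZ
  rw [hs, hatV_restrict (hq₁.trans hr), mem_elems_hatV le_rfl] at hZ
  obtain ⟨x, hx, hxZ⟩ := hZ
  exact hxZ ▸ h r (hq₁.trans hr) x hx

theorem all_all_all_imp_of_forall {φ ψ : SetFml (n + 3)}
    (h : ∀ r, q ≤ r → ∀ X ∈ Vp r, ∀ Y ∈ Vp r, ∀ Z ∈ Vp r,
      Forces r φ (Fin.cons X (Fin.cons Y (Fin.cons Z fun j => (s j).restrict r))) →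
      Forces r ψ (Fin.cons X (Fin.cons Y (Fin.cons Z fun j => (s j).restrict r)))) :
    Forces q (.all (.all (.all (.imp φ ψ)))) s := by
  intro q₁ h₁ Z hZ q₂ h₂ Y hY q₃ h₃ X hX r hr
  simp only [restrict_finCons, restrict_restrict h₂, restrict_restrict h₃, restrict_restrict hr]
  exact h r (h₁.trans (h₂.trans (h₃.trans hr))) _ (restrict_mem_Vp hX) _ (restrict_mem_Vp hY) _
    (restrict_mem_Vp hZ)

variable {A B F : ZFSet} {f i j : Fin n}

theorem singleValued_hatV (hF : A.IsFunc B F) (hs : s f = hatV F q) :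
    Forces q (.all (.all (.all (.imp
      (.and (.pairMem 2 1 f.succ.succ.succ) (.pairMem 2 0 f.succ.succ.succ)) (.eq 1 0))))) s := by
  refine all_all_all_imp_of_forall fun r hr X hX Y hY Z hZ ⟨hZY, hZX⟩ => ?_
  change pairV r Z Y ∈ ((s f).restrict r).elems r at hZY
  change pairV r Z X ∈ ((s f).restrict r).elems r at hZX
  rw [hs, hatV_restrict hr, pairV_mem_elems_hatV_iff hF.1 hZ hY] at hZY
  rw [hs, hatV_restrict hr, pairV_mem_elems_hatV_iff hF.1 hZ hX] at hZX
  obtain ⟨x, y, hxy, rfl, rfl⟩ := hZY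
  obtain ⟨x', y', hxy', hx, rfl⟩ := hZX
  obtain rfl := hatV_inj.1 hx
  exact congrArg (hatV · r) (hF.eq_of_pair_mem hxy hxy')

theorem injective_hatV (hF : F ⊆ A.prod B)
    (hinj : ∀ x x' y : ZFSet, x.pair y ∈ F → x'.pair y ∈ F → x = x') (hs : s f = hatV F q) :
    Forces q (SetFml.fInjective f) s := by
  refine all_all_all_imp_of_forall fun r hr X hX Y hY Z hZ ⟨hZX, hYX⟩ => ?_
  change pairV r Z X ∈ ((s f).restrict r).elems r at hZX
  change pairV r Y X ∈ ((s f).restrict r).elems r at hYX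
  rw [hs, hatV_restrict hr, pairV_mem_elems_hatV_iff hF hZ hX] at hZX
  rw [hs, hatV_restrict hr, pairV_mem_elems_hatV_iff hF hY hX] at hYX
  obtain ⟨x, y, hxy, rfl, rfl⟩ := hZX
  obtain ⟨x', y', hxy', rfl, hy⟩ := hYX
  obtain rfl := hatV_inj.1 hy
  exact congrArg (hatV · r) (hinj x x' y hxy hxy')

theorem funcFromTo_hatV (hF : A.IsFunc B F) (hsf : s f = hatV F q) (hsi : s i = hatV A q)
    (hsj : s j = hatV B q) : Forces q (SetFml.fFuncFromTo f i j) s := by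
  refine ⟨all_imp_mem_of_hatV hsf fun r hr z hz => ?_, singleValued_hatV hF hsf,
    all_imp_mem_of_hatV hsi fun r hr x hx => ?_⟩
  · obtain ⟨x, hx, y, hy, rfl⟩ := ZFSet.mem_prod.1 (hF.1 hz)
    refine ⟨hatV x r, hatV_mem_Vp x r, hatV y r, hatV_mem_Vp y r, ?_, ?_, hatV_pair x y r⟩
    · change hatV x r ∈ ((s i).restrict r).elems r
      rw [hsi, hatV_restrict hr]
      exact (mem_elems_hatV le_rfl).2 ⟨x, hx, rfl⟩
    · change hatV y r ∈ ((s j).restrict r).elems r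
      rw [hsj, hatV_restrict hr]
      exact (mem_elems_hatV le_rfl).2 ⟨y, hy, rfl⟩
  · obtain ⟨y, hxy, -⟩ := hF.2 x hx
    refine ⟨hatV y r, hatV_mem_Vp y r, ?_⟩
    change pairV r (hatV x r) (hatV y r) ∈ ((s f).restrict r).elems r
    rw [hsf, hatV_restrict hr, pairV_mem_elems_hatV_iff hF.1 (hatV_mem_Vp x r)
      (hatV_mem_Vp y r)]
    exact ⟨x, y, hxy, rfl, rfl⟩

theorem exists_injFromTo_hatV (hF : A.IsFunc B F)
    (hinj : ∀ x x' y : ZFSet, x.pair y ∈ F → x'.pair y ∈ F → x = x') (p : P) :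
    Forces p (.ex (SetFml.fInjFromTo 0 1 2)) ![hatV A p, hatV B p] :=
  ⟨hatV F p, hatV_mem_Vp F p, funcFromTo_hatV hF rfl rfl rfl, injective_hatV hF.1 hinj rfl⟩

theorem exists_injFromTo_hatV_powerset (A : ZFSet) (p : P) :
    Forces p (.ex (SetFml.fInjFromTo 0 1 2)) ![hatV A p, hatV A.powerset p] := by
  refine exists_injFromTo_hatV (F := ZFSet.map ({·}) A)
    (ZFSet.map_isFunc.2 fun x hx => ZFSet.mem_powerset.2 fun y hy => ?_) (fun x x' y h h' => ?_) p
  · rwa [ZFSet.mem_singleton.1 hy]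
  · obtain ⟨z, -, hz⟩ := ZFSet.mem_map.1 h
    obtain ⟨z', -, hz'⟩ := ZFSet.mem_map.1 h'
    obtain ⟨rfl, rfl⟩ := ZFSet.pair_inj.1 hz
    obtain ⟨rfl, h⟩ := ZFSet.pair_inj.1 hz'
    exact ZFSet.singleton_injective h.symm

theorem not_forces_exists_onto_hatV_powerset {t : Fin 2 → VSet P} {A : ZFSet}
    (h₀ : t 0 = hatV (A.prod A.powerset) q) (h₁ : t 1 = hatV A.powerset q) :
    ¬ Forces q (.ex (.and (SetFml.fSub 0 1)
      (.and (SetFml.fIsFunction 0) (SetFml.fOnto 0 2)))) t := by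
  rintro ⟨σ, hσ, hsub, hfun, honto⟩
  have ht : ∀ i, t i ∈ Vp q := Fin.forall_fin_two.2 ⟨h₀ ▸ hatV_mem_Vp _ q, h₁ ▸ hatV_mem_Vp _ q⟩
  have hσt := finCons_mem_Vp hσ ht
  let R : ZFSet → ZFSet → Prop := fun x y => pairV q (hatV x q) (hatV y q) ∈ σ.elems q
  have hR : ∀ x y y', R x y → R x y' → y = y' := fun x y y' hy hy' =>
    hatV_inj.1 <| hfun.2.all_all_all_imp_apply hσt (hatV_mem_Vp y' q) (hatV_mem_Vp y q)
      (hatV_mem_Vp x q) ⟨hy, hy'⟩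
  obtain ⟨B, hB, hBR⟩ := ZFSet.exists_mem_powerset_forall_not_rel A R hR
  have hBt : hatV B q ∈ (t 1).elems q := h₁ ▸ (mem_elems_hatV le_rfl).2 ⟨B, hB, rfl⟩
  obtain ⟨X, hX, hXB⟩ := honto.all_imp_apply hσt (hatV_mem_Vp B q) hBt
  have hXBσ : pairV q X (hatV B q) ∈ σ.elems q := hXB
  have hXBt : pairV q X (hatV B q) ∈ (t 0).elems q :=
    hsub.all_imp_apply hσt (pairV_mem_Vp hX (hatV_mem_Vp B q)) hXBσ
  rw [h₀, pairV_mem_elems_hatV_iff subset_rfl hX (hatV_mem_Vp B q)] at hXBt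
  obtain ⟨x, y, hxy, rfl, hy⟩ := hXBt
  obtain rfl := hatV_inj.1 hy
  exact hBR x (ZFSet.pair_mem_prod.1 hxy).1 hXBσ

theorem not_exists_onto_hatV_powerset (A : ZFSet) (p : P) :
    Forces p (.not (.ex (.and (SetFml.fSub 0 1)
      (.and (SetFml.fIsFunction 0) (SetFml.fOnto 0 2)))))
      ![hatV (A.prod A.powerset) p, hatV A.powerset p] :=
  fun _ hq => not_forces_exists_onto_hatV_powerset (hatV_restrict hq _) (hatV_restrict hq _)

end Forces

/-- **`⊩ₚ |ℕ̂(p)| < |P(ℕ)^(p)| < |P(P(ℕ))^(p)|`:**  it is forced at `p` that there is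
an injective function from `ℕ̂(p)` into `P(ℕ)^(p)` and one from `P(ℕ)^(p)` into
`P(P(ℕ))^(p)`, while no function contained in `(ℕ×P(ℕ))^(p)` is forced to be onto
`P(ℕ)^(p)` and no function contained in `P(ℕ)^(p) × P(P(ℕ))^(p)` is forced to be onto
`P(P(ℕ))^(p)`. -/
theorem hat_cardinalities_strict {P : Type} [PartialOrder P] (p : P) :
    Forces p (.ex (SetFml.fInjFromTo 0 1 2))
      ![VSet.hatV ZFSet.omega p, VSet.hatV (ZFSet.powerset ZFSet.omega) p] ∧
    Forces p (.ex (SetFml.fInjFromTo 0 1 2))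
      ![VSet.hatV (ZFSet.powerset ZFSet.omega) p,
        VSet.hatV (ZFSet.powerset (ZFSet.powerset ZFSet.omega)) p] ∧
    Forces p
      (.not (.ex (.and (SetFml.fSub 0 1)
        (.and (SetFml.fIsFunction 0) (SetFml.fOnto 0 2)))))
      ![VSet.hatV (ZFSet.omega.prod (ZFSet.powerset ZFSet.omega)) p,
        VSet.hatV (ZFSet.powerset ZFSet.omega) p] ∧
    Forces p
      (.not (.ex (.and (SetFml.fSub 0 1)
        (.and (SetFml.fIsFunction 0) (SetFml.fOnto 0 2)))))
      ![VSet.hatV ((ZFSet.powerset ZFSet.omega).prod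
          (ZFSet.powerset (ZFSet.powerset ZFSet.omega))) p,
        VSet.hatV (ZFSet.powerset (ZFSet.powerset ZFSet.omega)) p] :=
  ⟨Forces.exists_injFromTo_hatV_powerset _ p, Forces.exists_injFromTo_hatV_powerset _ p,
    Forces.not_exists_onto_hatV_powerset _ p,
    Forces.not_exists_onto_hatV_powerset _ p⟩

end
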